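/- arXiv:1912.10719 — 2 statements merged into one kernel-verified Lean document; each statement's English description precedes it below -/
import Mathlib

section
/- Let ψ be a lsc convex function on R^d with ∇ψ♯U_d = P, where P has density p supported on an open convex set X ⊆ R^d satisfying λ_R ≤ p ≤ Λ_R on X ∩ RB_d for every R. Then for any compact M ⊂ B_d there exist constants α_M, A_M > 0 such that for every Borel A ⊆ M, α_M ℓ_d(A) ≤ μ_ψ(A) ≤ A_M (ℓ_d(A))^{1/d}, where μ_ψ(A) = ℓ_d(∂ψ(A)). -/
/-!
Write `μ = u_d ℓ_d` for the spherical uniform. Where `ψ` is differentiable, `∇ψ x ∈ ∂ψ(x)`,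
so `μ(A) ≤ P(∂ψ(A))`. Conversely, let `ψ*` be the Legendre transform of `ψ` restricted to the
closed unit ball: it is `1`-Lipschitz, hence a.e. differentiable, and `z ∈ ∂ψ(x)` gives
`x ∈ ∂ψ*(z)`, so `∇ψ*` inverts `∇ψ` off null sets and `P(∂ψ(A)) ≤ μ(A)`.

Subgradients over `B_d` are bounded, and they lie in `closure X`: `∇ψ ∈ X` a.e. on `B_d`, and
monotonicity of `∂ψ` against a separating hyperplane rules out subgradients outside
`closure X`. As `∂X` is null, `λ_R ≤ p ≤ Λ_R` a.e. on `∂ψ(A)`. Finally `u_d ≥ 1 / a_d` on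
`B_d`, while splitting `A` at radius `ℓ_d(A)^{1/d}` and integrating `‖x‖^{1-d}` in polar
coordinates gives `μ(A) ≤ C ℓ_d(A)^{1/d}`.
-/

open Metric MeasureTheory Real Classical
open RealInnerProductSpace
open scoped ENNReal
open Set Filter Topology

section Subdifferential

variable {E : Type*} [NormedAddCommGroup E] [InnerProductSpace ℝ E]

def subdifferential (ψ : E → ℝ) (x : E) : Set E :=
  {z | ∀ w, ψ x + ⟪z, w - x⟫ ≤ ψ w}

lemma inner_sub_nonneg_of_mem_subdifferential {ψ : E → ℝ} {x y z g : E}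
    (hz : z ∈ subdifferential ψ x) (hg : g ∈ subdifferential ψ y) :
    0 ≤ ⟪g - z, y - x⟫ := by
  have hxy := hz y
  have hyx := hg x
  rw [← neg_sub y x, inner_neg_right] at hyx
  rw [inner_sub_left]
  linarith

lemma norm_le_of_mem_subdifferential {ψ : E → ℝ} {K : NNReal} {x z : E}
    (hψ : LipschitzOnWith K ψ (closedBall x 1)) (hz : z ∈ subdifferential ψ x) : ‖z‖ ≤ K := by
  rcases eq_or_ne z 0 with rfl | hz0
  · simp
  set w := x + ‖z‖⁻¹ • z
  have hwx : ‖w - x‖ = 1 := by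
    simp [w, norm_smul, hz0]
  have hinner : ⟪z, w - x⟫ = ‖z‖ := by
    simp only [w, add_sub_cancel_left, real_inner_smul_right, real_inner_self_eq_norm_sq]
    field_simp
  have hlip := hψ.le_add_mul (mem_closedBall.2 (by rw [dist_eq_norm, hwx]))
    (mem_closedBall_self zero_le_one)
  have := hz w
  rw [dist_eq_norm, hwx] at hlip
  linarith

variable [CompleteSpace E]

lemma ConvexOn.gradient_mem_subdifferential {ψ : E → ℝ} (hψ : ConvexOn ℝ univ ψ) {x : E}
    (hx : DifferentiableAt ℝ ψ x) : gradient ψ x ∈ subdifferential ψ x := by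
  intro w
  have hline : HasDerivAt (ψ ∘ AffineMap.lineMap (k := ℝ) x w) (fderiv ℝ ψ x (w - x)) 0 := by
    have hx' : HasFDerivAt ψ (fderiv ℝ ψ x) (AffineMap.lineMap (k := ℝ) x w 0) := by
      simpa using hx.hasFDerivAt
    exact hx'.comp_hasDerivAt 0 AffineMap.hasDerivAt_lineMap
  have := (hψ.comp_affineMap (AffineMap.lineMap x w)).le_slope_of_hasDerivAt (mem_univ 0)
    (mem_univ 1) zero_lt_one hline
  rw [slope_def_field] at this
  simp only [Function.comp_apply, AffineMap.lineMap_apply_zero, AffineMap.lineMap_apply_one,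
    sub_zero, div_one] at this
  rw [gradient, InnerProductSpace.toDual_symm_apply]
  linarith

lemma eq_gradient_of_mem_subdifferential {ψ : E → ℝ} {x z : E} (hx : DifferentiableAt ℝ ψ x)
    (hz : z ∈ subdifferential ψ x) : z = gradient ψ x := by
  have hmin : IsLocalMin (fun w => ψ w - ⟪z, w⟫) x := Eventually.of_forall fun w => by
    have := hz w
    rw [inner_sub_right] at this
    simp only
    linarith
  have hderiv := hmin.hasFDerivAt_eq_zero (hx.hasFDerivAt.sub (innerSL ℝ z).hasFDerivAt)
  refine ext_inner_right ℝ fun v => ?_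
  have := congrArg (· v) hderiv
  simp only [sub_apply, innerSL_apply_apply, zero_apply] at this
  rw [gradient, InnerProductSpace.toDual_symm_apply]
  linarith

lemma mem_closure_of_mem_subdifferential {ψ : E → ℝ} {C U : Set E} {K : ℝ} (hC : Convex ℝ C)
    (hU : IsOpen U) (hK : ∀ y ∈ U, ∀ g ∈ subdifferential ψ y, ‖g‖ ≤ K)
    (hdense : U ⊆ closure {y ∈ U | ∃ g ∈ subdifferential ψ y, g ∈ C})
    {x z : E} (hx : x ∈ U) (hz : z ∈ subdifferential ψ x) : z ∈ closure C := by
  by_contra hzC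
  obtain ⟨f, c, hfz, hfC⟩ := geometric_hahn_banach_point_closed hC.closure isClosed_closure hzC
  set v := (InnerProductSpace.toDual ℝ E).symm f
  have hv : ∀ w, ⟪v, w⟫ = f w := fun w => InnerProductSpace.toDual_symm_apply
  obtain ⟨t, htU, ht⟩ : ∃ t : ℝ, x - t • v ∈ U ∧ 0 < t := by
    have : Tendsto (fun t : ℝ => x - t • v) (𝓝 0) (𝓝 x) :=
      Continuous.tendsto' (by fun_prop) 0 x (by simp)
    exact ((this.eventually (hU.mem_nhds hx)).filter_mono nhdsWithin_le_nhds).and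
      self_mem_nhdsWithin |>.exists (f := 𝓝[>] 0)
  -- monotonicity of `∂ψ` between `x` and points near `x - t v` with subgradients in `C`
  have key : ∀ δ > 0, t * (c - f z) ≤ (K + ‖z‖) * δ := by
    intro δ hδ
    obtain ⟨y, ⟨hyU, g, hg, hgC⟩, hy⟩ := Metric.mem_closure_iff.1 (hdense htU) δ hδ
    have hmono := inner_sub_nonneg_of_mem_subdifferential hz hg
    have hsplit : ⟪g - z, y - x⟫ = ⟪g - z, y - (x - t • v)⟫ - t * (f g - f z) := by
      rw [← hv, ← hv, ← inner_sub_right, real_inner_comm (g - z) v, ← real_inner_smul_right,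
        ← inner_sub_right]
      congr 1; module
    have herr : ⟪g - z, y - (x - t • v)⟫ ≤ (K + ‖z‖) * δ := by
      calc ⟪g - z, y - (x - t • v)⟫ ≤ ‖g - z‖ * ‖y - (x - t • v)‖ := real_inner_le_norm _ _
        _ ≤ (K + ‖z‖) * δ := by
          have hgz : ‖g - z‖ ≤ K + ‖z‖ := (norm_sub_le _ _).trans (by linarith [hK y hyU g hg])
          have hyc : ‖y - (x - t • v)‖ ≤ δ := by rw [← dist_eq_norm, dist_comm]; exact hy.le
          exact mul_le_mul hgz hyc (norm_nonneg _) ((norm_nonneg _).trans hgz)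
    have := hfC g (subset_closure hgC)
    nlinarith
  have hlim : Tendsto (fun δ => (K + ‖z‖) * δ) (𝓝[>] 0) (𝓝 0) :=
    ((continuous_const_mul (K + ‖z‖)).tendsto' 0 0 (mul_zero _)).mono_left nhdsWithin_le_nhds
  have := ge_of_tendsto hlim (eventually_nhdsWithin_of_forall key)
  nlinarith

end Subdifferential

section LocalConjugate

variable {E : Type*} [NormedAddCommGroup E] [InnerProductSpace ℝ E] {ψ : E → ℝ}

noncomputable def localConjugate (ψ : E → ℝ) (z : E) : ℝ :=
  sSup ((fun w => ⟪z, w⟫ - ψ w) '' closedBall 0 1)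

lemma localConjugate_le {z : E} {c : ℝ} (h : ∀ w ∈ closedBall (0 : E) 1, ⟪z, w⟫ - ψ w ≤ c) :
    localConjugate ψ z ≤ c :=
  csSup_le ((nonempty_closedBall.2 zero_le_one).image _) (forall_mem_image.2 h)

variable [ProperSpace E]

lemma le_localConjugate (hψ : Continuous ψ) {w : E} (hw : w ∈ closedBall (0 : E) 1) (z : E) :
    ⟪z, w⟫ - ψ w ≤ localConjugate ψ z :=
  le_csSup ((isCompact_closedBall 0 1).image (by fun_prop)).bddAbove (mem_image_of_mem _ hw)

lemma lipschitzWith_localConjugate (hψ : Continuous ψ) : LipschitzWith 1 (localConjugate ψ) := by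
  refine LipschitzWith.of_le_add fun z z' => localConjugate_le fun w hw => ?_
  have hconj := le_localConjugate hψ hw z'
  have hinner : ⟪z - z', w⟫ ≤ dist z z' := by
    rw [dist_eq_norm]
    calc ⟪z - z', w⟫ ≤ ‖z - z'‖ * ‖w‖ := real_inner_le_norm _ _
      _ ≤ ‖z - z'‖ := mul_le_of_le_one_right (norm_nonneg _) (mem_closedBall_zero_iff.1 hw)
  rw [inner_sub_left] at hinner
  linarith

lemma mem_subdifferential_localConjugate (hψ : Continuous ψ) {x z : E}
    (hx : x ∈ closedBall (0 : E) 1) (hz : z ∈ subdifferential ψ x) :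
    x ∈ subdifferential (localConjugate ψ) z := by
  have hmax : localConjugate ψ z ≤ ⟪z, x⟫ - ψ x := localConjugate_le fun w _ => by
    have := hz w
    rw [inner_sub_right] at this
    linarith
  intro z'
  have := le_localConjugate hψ hx z'
  rw [inner_sub_right, real_inner_comm z' x, real_inner_comm z x]
  linarith

end LocalConjugate

section Measures

variable {α : Type*} [MeasurableSpace α] {μ : Measure α} {f : α → ℝ≥0∞} {c : ℝ≥0∞}
  {s t : Set α}

lemma withDensity_apply_le_mul_of_subset [SFinite μ] (ht : MeasurableSet t) (hst : s ⊆ t)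
    (h : ∀ᵐ x ∂μ, x ∈ t → f x ≤ c) : μ.withDensity f s ≤ c * μ s := by
  rw [withDensity_apply', ← setLIntegral_const]
  exact lintegral_mono_ae (ae_restrict_of_ae_restrict_of_subset hst ((ae_restrict_iff' ht).2 h))

lemma mul_le_withDensity_apply_of_subset [SFinite μ] (ht : MeasurableSet t) (hst : s ⊆ t)
    (h : ∀ᵐ x ∂μ, x ∈ t → c ≤ f x) : c * μ s ≤ μ.withDensity f s := by
  rw [withDensity_apply', ← setLIntegral_const]
  exact lintegral_mono_ae (ae_restrict_of_ae_restrict_of_subset hst ((ae_restrict_iff' ht).2 h))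

lemma ae_of_map_eq_withDensity {β : Type*} [MeasurableSpace β] {ν : Measure β} {g : α → β}
    (hg : Measurable g) {f : β → ℝ≥0∞} (hmap : μ.map g = ν.withDensity f) {X : Set β}
    (hX : MeasurableSet X) (hf : ∀ x ∉ X, f x = 0) : ∀ᵐ y ∂μ, g y ∈ X := by
  refine ae_of_ae_map hg.aemeasurable ?_
  rw [hmap, ae_iff]
  change ν.withDensity f Xᶜ = 0
  rw [withDensity_apply _ hX.compl]
  exact (setLIntegral_congr_fun hX.compl fun x hx => hf x hx).trans lintegral_zero

lemma IsOpen.subset_closure_of_ae [TopologicalSpace α] [μ.IsOpenPosMeasure] {U : Set α}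
    {p : α → Prop} (hU : IsOpen U) (h : ∀ᵐ x ∂μ, x ∈ U → p x) : U ⊆ closure {x ∈ U | p x} :=
  ((Measure.dense_of_ae h).open_subset_closure_inter hU).trans
    (closure_mono fun _ hx => ⟨hx.1, hx.2 hx.1⟩)

end Measures

lemma ENNReal.ofReal_div_mul_le {a b : ℝ} {x y : ℝ≥0∞} (hb : 0 < b)
    (h : ENNReal.ofReal a * x ≤ ENNReal.ofReal b * y) : ENNReal.ofReal (a / b) * x ≤ y := by
  rwa [← ENNReal.mul_le_mul_iff_right (ENNReal.ofReal_pos.2 hb).ne' ENNReal.ofReal_ne_top,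
    ← mul_assoc, ← ENNReal.ofReal_mul hb.le, mul_div_cancel₀ _ hb.ne']

lemma ENNReal.le_ofReal_div_mul {a b : ℝ} {x y : ℝ≥0∞} (hb : 0 < b)
    (h : ENNReal.ofReal b * y ≤ ENNReal.ofReal a * x) : y ≤ ENNReal.ofReal (a / b) * x := by
  rwa [← ENNReal.mul_le_mul_iff_right (ENNReal.ofReal_pos.2 hb).ne' ENNReal.ofReal_ne_top,
    ← mul_assoc, ← ENNReal.ofReal_mul hb.le, mul_div_cancel₀ _ hb.ne']

section Radial

open Module

variable {E : Type*} [NormedAddCommGroup E] [NormedSpace ℝ E] [FiniteDimensional ℝ E]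
  [Nontrivial E] [MeasurableSpace E] [BorelSpace E] (μ : Measure E) [μ.IsAddHaarMeasure]

lemma lintegral_ball_inv_norm_pow {r : ℝ} (hr : 0 ≤ r) :
    ∫⁻ x in ball (0 : E) r, ENNReal.ofReal (‖x‖ ^ (finrank ℝ E - 1))⁻¹ ∂μ =
      ENNReal.ofReal (finrank ℝ E * μ.real (ball 0 1) * r) := by
  set f : ℝ → ℝ := fun y => (y ^ (finrank ℝ E - 1))⁻¹
  have hpolar : ∀ y ∈ Ioi (0 : ℝ), y ^ (finrank ℝ E - 1) • (Iio r).indicator f y =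
      (Iio r).indicator 1 y := by
    intro y hy
    by_cases hyr : y ∈ Iio r
    · simp [f, hyr, mul_inv_cancel₀ (pow_pos (mem_Ioi.1 hy) _).ne']
    · simp [hyr]
  have hint : IntegrableOn (fun x : E => f ‖x‖) (ball 0 r) μ := by
    refine (integrableOn_fun_norm_addHaar μ).2 ((integrableOn_const measure_Ioo_lt_top.ne
      (C := (1 : ℝ))).congr_fun (fun y hy => ?_) measurableSet_Ioo)
    simp [f, mul_inv_cancel₀ (pow_pos hy.1 _).ne']
  rw [← ofReal_integral_eq_lintegral_ofReal hint
    (ae_restrict_of_forall_mem measurableSet_ball fun x _ => by positivity),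
    ← integral_indicator measurableSet_ball]
  have hind : (ball (0 : E) r).indicator (fun x => f ‖x‖) = fun x => (Iio r).indicator f ‖x‖ := by
    ext x; simp [indicator]
  rw [hind, integral_fun_norm_addHaar, setIntegral_congr_fun measurableSet_Ioi hpolar,
    integral_indicator measurableSet_Iio, Measure.restrict_restrict measurableSet_Iio]
  simp [Iio_inter_Ioi, Real.volume_real_Ioo_of_le hr, nsmul_eq_mul, mul_assoc]

/-- Splitting `A` at the radius `ρ` with `ρ ^ n = μ A` balances the two contributions. -/
lemma setLIntegral_inv_norm_pow_le {A : Set E} (hA : μ A ≠ ∞) :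
    ∫⁻ x in A, ENNReal.ofReal (‖x‖ ^ (finrank ℝ E - 1))⁻¹ ∂μ ≤
      ENNReal.ofReal (finrank ℝ E * μ.real (ball 0 1) + 1) * μ A ^ (1 / finrank ℝ E : ℝ) := by
  set n := finrank ℝ E
  have hn0 : 0 < n := finrank_pos
  rcases eq_or_ne (μ A) 0 with h0 | h0
  · simp [setLIntegral_measure_zero _ _ h0]
  set ρ := μ.real A ^ (1 / n : ℝ)
  have hA0 : 0 < μ.real A := ENNReal.toReal_pos h0 hA
  have hρ : 0 < ρ := rpow_pos_of_pos hA0 _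
  have hρn : ρ ^ n = μ.real A := by
    rw [← rpow_natCast, ← rpow_mul hA0.le, one_div_mul_cancel (by positivity), rpow_one]
  have hρA : ENNReal.ofReal ρ = μ A ^ (1 / n : ℝ) := by
    rw [← ENNReal.ofReal_rpow_of_pos hA0, ofReal_measureReal hA]
  have hnear : ∫⁻ x in A ∩ ball 0 ρ, ENNReal.ofReal (‖x‖ ^ (n - 1))⁻¹ ∂μ ≤
      ENNReal.ofReal (n * μ.real (ball 0 1) * ρ) :=
    (lintegral_mono_set inter_subset_right).trans_eq (lintegral_ball_inv_norm_pow μ hρ.le)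
  have hfar : ∫⁻ x in A \ ball 0 ρ, ENNReal.ofReal (‖x‖ ^ (n - 1))⁻¹ ∂μ ≤ ENNReal.ofReal ρ := by
    have hbound : ∀ᵐ x ∂μ.restrict (A \ ball 0 ρ),
        ENNReal.ofReal (‖x‖ ^ (n - 1))⁻¹ ≤ ENNReal.ofReal (ρ ^ (n - 1))⁻¹ := by
      refine ae_restrict_of_ae_restrict_of_subset (fun x hx => hx.2)
        (ae_restrict_of_forall_mem measurableSet_ball.compl fun x hx => ?_)
      rw [mem_compl_iff, mem_ball_zero_iff, not_lt] at hx
      exact ENNReal.ofReal_le_ofReal (inv_anti₀ (pow_pos hρ _) (pow_le_pow_left₀ hρ.le hx _))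
    calc ∫⁻ x in A \ ball 0 ρ, ENNReal.ofReal (‖x‖ ^ (n - 1))⁻¹ ∂μ
        ≤ ENNReal.ofReal (ρ ^ (n - 1))⁻¹ * μ (A \ ball 0 ρ) :=
          (lintegral_mono_ae hbound).trans_eq (setLIntegral_const _ _)
      _ ≤ ENNReal.ofReal (ρ ^ (n - 1))⁻¹ * μ A := by gcongr; exact sdiff_subset
      _ = ENNReal.ofReal ρ := by
        rw [← ofReal_measureReal hA, ← ENNReal.ofReal_mul (by positivity), ← hρn,
          ← pow_sub_one_mul hn0.ne', inv_mul_cancel_left₀ (pow_pos hρ _).ne']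
  calc ∫⁻ x in A, ENNReal.ofReal (‖x‖ ^ (n - 1))⁻¹ ∂μ
      = ∫⁻ x in A ∩ ball 0 ρ, ENNReal.ofReal (‖x‖ ^ (n - 1))⁻¹ ∂μ +
          ∫⁻ x in A \ ball 0 ρ, ENNReal.ofReal (‖x‖ ^ (n - 1))⁻¹ ∂μ :=
        (lintegral_inter_add_sdiff _ _ measurableSet_ball).symm
    _ ≤ ENNReal.ofReal (n * μ.real (ball 0 1) * ρ) + ENNReal.ofReal ρ := add_le_add hnear hfar
    _ = ENNReal.ofReal (n * μ.real (ball 0 1) + 1) * μ A ^ (1 / n : ℝ) := by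
      rw [← hρA, ← ENNReal.ofReal_add (by positivity) hρ.le, ← ENNReal.ofReal_mul (by positivity)]
      ring_nf

end Radial

section SphericalDensity

variable {E : Type*} [NormedAddCommGroup E] {d : ℕ} {a : ℝ}

noncomputable def sphericalDensity (d : ℕ) (a : ℝ) (x : E) : ℝ≥0∞ :=
  if x ∈ ball (0 : E) 1 \ {0} then ENNReal.ofReal (1 / (a * ‖x‖ ^ (d - 1))) else 0

lemma mem_closedBall_of_sphericalDensity_ne_zero {x : E} (h : sphericalDensity d a x ≠ 0) :
    x ∈ closedBall (0 : E) 1 := by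
  by_contra hx
  exact h (if_neg fun hx' => hx (ball_subset_closedBall hx'.1))

lemma sphericalDensity_le (ha : 0 ≤ a) (x : E) :
    sphericalDensity d a x ≤ ENNReal.ofReal a⁻¹ * ENNReal.ofReal (‖x‖ ^ (d - 1))⁻¹ := by
  rw [← ENNReal.ofReal_mul (inv_nonneg.2 ha), ← mul_inv, ← one_div, sphericalDensity]
  split_ifs <;> simp

variable [MeasurableSpace E]

lemma ae_ofReal_inv_le_sphericalDensity (μ : Measure E) [NullSingletonClass μ] (ha : 0 < a) :
    ∀ᵐ x ∂μ, x ∈ ball (0 : E) 1 → ENNReal.ofReal a⁻¹ ≤ sphericalDensity d a x := by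
  filter_upwards [compl_mem_ae_iff.2 (measure_singleton (0 : E))] with x hx0 hx
  rw [sphericalDensity, if_pos ⟨hx, hx0⟩]
  have hx0 : 0 < ‖x‖ := norm_pos_iff.2 hx0
  have hx1 : ‖x‖ ^ (d - 1) ≤ 1 := pow_le_one₀ hx0.le (mem_ball_zero_iff.1 hx).le
  refine ENNReal.ofReal_le_ofReal ?_
  rw [one_div, mul_inv]
  exact le_mul_of_one_le_right (by positivity) (one_le_inv₀ (by positivity) |>.2 hx1)

variable [BorelSpace E]

lemma measurable_sphericalDensity : Measurable (sphericalDensity (E := E) d a) :=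
  Measurable.ite (measurableSet_ball.diff (measurableSet_singleton 0)) (by fun_prop)
    measurable_const

variable [NormedSpace ℝ E] [FiniteDimensional ℝ E] [Nontrivial E] (μ : Measure E)
  [μ.IsAddHaarMeasure]

lemma withDensity_sphericalDensity_le (hdim : Module.finrank ℝ E = d) (ha : 0 ≤ a) {A : Set E}
    (hA : μ A ≠ ∞) :
    μ.withDensity (sphericalDensity d a) A ≤
      ENNReal.ofReal ((d * μ.real (ball 0 1) + 1) / a) * μ A ^ (1 / d : ℝ) := by
  subst hdim
  rw [withDensity_apply', div_eq_inv_mul, ENNReal.ofReal_mul (inv_nonneg.2 ha), mul_assoc]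
  calc ∫⁻ x in A, sphericalDensity (Module.finrank ℝ E) a x ∂μ
      ≤ ∫⁻ x in A, ENNReal.ofReal a⁻¹ * ENNReal.ofReal (‖x‖ ^ (Module.finrank ℝ E - 1))⁻¹ ∂μ :=
        lintegral_mono (sphericalDensity_le ha)
    _ ≤ _ := by
      rw [lintegral_const_mul' _ _ ENNReal.ofReal_ne_top]
      gcongr
      exact setLIntegral_inv_norm_pow_le μ hA

end SphericalDensity

section Transport

variable {E : Type*} [NormedAddCommGroup E] [InnerProductSpace ℝ E] [FiniteDimensional ℝ E]
  {ψ : E → ℝ}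

lemma ConvexOn.exists_subdifferential_subset_ball (hψ : ConvexOn ℝ univ ψ) (r : ℝ) :
    ∃ R > 0, ∀ x ∈ closedBall (0 : E) r, subdifferential ψ x ⊆ ball 0 R := by
  obtain ⟨K, hK⟩ := hψ.locallyLipschitz.locallyLipschitzOn.exists_lipschitzOnWith_of_compact
    (isCompact_closedBall (0 : E) (r + 1))
  refine ⟨K + 1, by positivity, fun x hx z hz => mem_ball_zero_iff.2 ?_⟩
  have hxK : closedBall x 1 ⊆ closedBall 0 (r + 1) :=
    closedBall_subset_closedBall' (by rw [mem_closedBall] at hx; linarith)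
  exact (norm_le_of_mem_subdifferential (hK.mono hxK) hz).trans_lt (lt_add_one _)

variable [MeasurableSpace E] [BorelSpace E] {ν : Measure E} [ν.IsAddHaarMeasure]

lemma ConvexOn.ae_differentiableAt (hψ : ConvexOn ℝ univ ψ) :
    ∀ᵐ x ∂ν, DifferentiableAt ℝ ψ x := by
  have hball : ∀ n : ℕ, ∀ᵐ x ∂ν, x ∈ ball (0 : E) n → DifferentiableAt ℝ ψ x := by
    intro n
    obtain ⟨K, hK⟩ := hψ.locallyLipschitz.locallyLipschitzOn.exists_lipschitzOnWith_of_compact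
      (isCompact_closedBall (0 : E) n)
    filter_upwards [(hK.mono ball_subset_closedBall).ae_differentiableWithinAt_of_mem]
      with x hx hxn
    exact (hx hxn).differentiableAt (isOpen_ball.mem_nhds hxn)
  filter_upwards [ae_all_iff.2 hball] with x hx
  obtain ⟨n, hn⟩ := exists_nat_gt ‖x‖
  exact hx n (mem_ball_zero_iff.2 hn)

lemma Convex.ae_mem_of_mem_closure {X : Set E} (hXo : IsOpen X) (hX : Convex ℝ X) :
    ∀ᵐ x ∂ν, x ∈ closure X → x ∈ X := by
  filter_upwards [measure_eq_zero_iff_ae_notMem.1 (hX.addHaar_frontier ν)] with x hx hxX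
  by_contra hxn
  exact hx ⟨hxX, by rwa [hXo.interior_eq]⟩

lemma measurable_gradient (ψ : E → ℝ) : Measurable (gradient ψ) :=
  (InnerProductSpace.toDual ℝ E).symm.continuous.measurable.comp (measurable_fderiv ℝ ψ)

lemma ConvexOn.subdifferential_subset_closure_of_map_eq (hψ : ConvexOn ℝ univ ψ) {C U : Set E}
    (hC : Convex ℝ C) (hCm : MeasurableSet C) (hU : IsOpen U) (hUb : Bornology.IsBounded U)
    {u f : E → ℝ≥0∞} (hu : Measurable u) (hupos : ∀ᵐ x ∂ν, x ∈ U → u x ≠ 0)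
    (hmap : (ν.withDensity u).map (gradient ψ) = ν.withDensity f) (hf : ∀ x ∉ C, f x = 0)
    {x : E} (hx : x ∈ U) : subdifferential ψ x ⊆ closure C := by
  obtain ⟨r, hr⟩ := hUb.subset_closedBall 0
  obtain ⟨R, -, hR⟩ := hψ.exists_subdifferential_subset_ball r
  have hgradC := (ae_withDensity_iff hu).1
    (ae_of_map_eq_withDensity (measurable_gradient ψ) hmap hCm hf)
  have hgood : ∀ᵐ y ∂ν, y ∈ U → ∃ g ∈ subdifferential ψ y, g ∈ C := by
    filter_upwards [hψ.ae_differentiableAt, hgradC, hupos] with y hyd hyC hyu hyU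
    exact ⟨_, hψ.gradient_mem_subdifferential hyd, hyC (hyu hyU)⟩
  exact fun z hz => mem_closure_of_mem_subdifferential hC hU
    (fun y hy g hg => (mem_ball_zero_iff.1 (hR y (hr hy) hg)).le)
    (hU.subset_closure_of_ae hgood) hx hz

lemma measure_le_map_gradient_iUnion_subdifferential {μ : Measure E} (hψ : ConvexOn ℝ univ ψ)
    (hdiff : ∀ᵐ x ∂μ, DifferentiableAt ℝ ψ x) (A : Set E) :
    μ A ≤ μ.map (gradient ψ) (⋃ x ∈ A, subdifferential ψ x) := by
  refine (measure_mono_ae ?_).trans (Measure.le_map_apply (measurable_gradient ψ).aemeasurable _)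
  filter_upwards [hdiff] with x hx hxA
  exact mem_iUnion₂.2 ⟨x, hxA, hψ.gradient_mem_subdifferential hx⟩

lemma map_gradient_iUnion_subdifferential_le {μ : Measure E} (hψ : ConvexOn ℝ univ ψ)
    (hμ : ∀ᵐ x ∂μ, x ∈ closedBall (0 : E) 1 ∧ DifferentiableAt ℝ ψ x)
    (hac : μ.map (gradient ψ) ≪ ν) {A : Set E} (hA : MeasurableSet A)
    (hA1 : A ⊆ closedBall 0 1) :
    μ.map (gradient ψ) (⋃ x ∈ A, subdifferential ψ x) ≤ μ A := by
  have hc : Continuous ψ := hψ.locallyLipschitz.continuous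
  set W := {z | DifferentiableAt ℝ (localConjugate ψ) z ∧ gradient (localConjugate ψ) z ∈ A}
  have hW : MeasurableSet W :=
    (measurableSet_of_differentiableAt ℝ _).inter (measurable_gradient _ hA)
  have hSW : (⋃ x ∈ A, subdifferential ψ x) ≤ᵐ[ν] W := by
    filter_upwards [(lipschitzWith_localConjugate hc).ae_differentiableAt] with z hz hzS
    obtain ⟨x, hxA, hzx⟩ := mem_iUnion₂.1 hzS
    have := eq_gradient_of_mem_subdifferential hz
      (mem_subdifferential_localConjugate hc (hA1 hxA) hzx)
    exact ⟨hz, this ▸ hxA⟩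
  calc μ.map (gradient ψ) (⋃ x ∈ A, subdifferential ψ x)
      ≤ μ.map (gradient ψ) W := measure_mono_ae (hac.ae_le hSW)
    _ = μ (gradient ψ ⁻¹' W) := Measure.map_apply (measurable_gradient ψ) hW
    _ ≤ μ A := by
      refine measure_mono_ae ?_
      filter_upwards [hμ] with y ⟨hy1, hyd⟩ ⟨hzd, hzA⟩
      have := eq_gradient_of_mem_subdifferential hzd
        (mem_subdifferential_localConjugate hc hy1 (hψ.gradient_mem_subdifferential hyd))
      exact this ▸ hzA

lemma measure_le_mul_measure_iUnion_subdifferential {μ : Measure E} (hψ : ConvexOn ℝ univ ψ)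
    (hμ : μ ≪ ν) {f : E → ℝ≥0∞} (hmap : μ.map (gradient ψ) = ν.withDensity f) {C : ℝ≥0∞}
    {T A : Set E} (hT : MeasurableSet T) (hAT : ⋃ x ∈ A, subdifferential ψ x ⊆ T)
    (hf : ∀ᵐ x ∂ν, x ∈ T → f x ≤ C) : μ A ≤ C * ν (⋃ x ∈ A, subdifferential ψ x) :=
  (measure_le_map_gradient_iUnion_subdifferential hψ (hμ.ae_le hψ.ae_differentiableAt) A).trans
    (hmap ▸ withDensity_apply_le_mul_of_subset hT hAT hf)

lemma mul_measure_iUnion_subdifferential_le_withDensity (hψ : ConvexOn ℝ univ ψ)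
    {u f : E → ℝ≥0∞} (hu : Measurable u) (hu1 : ∀ x, u x ≠ 0 → x ∈ closedBall (0 : E) 1)
    (hmap : (ν.withDensity u).map (gradient ψ) = ν.withDensity f) {c : ℝ≥0∞} {T A : Set E}
    (hT : MeasurableSet T) (hAT : ⋃ x ∈ A, subdifferential ψ x ⊆ T)
    (hf : ∀ᵐ x ∂ν, x ∈ T → c ≤ f x) (hA : MeasurableSet A) (hA1 : A ⊆ closedBall 0 1) :
    c * ν (⋃ x ∈ A, subdifferential ψ x) ≤ ν.withDensity u A := by
  have hμ : ∀ᵐ x ∂ν.withDensity u, x ∈ closedBall (0 : E) 1 ∧ DifferentiableAt ℝ ψ x := by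
    refine (ae_withDensity_iff hu).2 ?_
    filter_upwards [hψ.ae_differentiableAt] with x hx hx0 using ⟨hu1 x hx0, hx⟩
  exact (mul_le_withDensity_apply_of_subset hT hAT hf).trans (hmap ▸
    map_gradient_iUnion_subdifferential_le hψ hμ (hmap ▸ withDensity_absolutelyContinuous _ _)
      hA hA1)

end Transport

theorem monge_ampere_bounds_on_compacts_general (d : ℕ) (hd : 1 ≤ d)
    (X : Set (EuclideanSpace ℝ (Fin d))) (hXo : IsOpen X) (hXconv : Convex ℝ X)
    (p : EuclideanSpace ℝ (Fin d) → ℝ)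
    (hp0 : ∀ x ∉ X, p x = 0)
    (hAssumptionA : ∀ R : ℝ, 0 < R → ∃ lam Lam : ℝ, 0 < lam ∧ lam ≤ Lam ∧
      ∀ x ∈ X ∩ ball (0 : EuclideanSpace ℝ (Fin d)) R, lam ≤ p x ∧ p x ≤ Lam)
    (a : ℝ) (ha : a = 2 * π ^ ((d : ℝ) / 2) / Gamma ((d : ℝ) / 2))
    (u : EuclideanSpace ℝ (Fin d) → ℝ≥0∞)
    (hu : ∀ x, u x = if x ∈ ball (0 : EuclideanSpace ℝ (Fin d)) 1 \ {0}
      then ENNReal.ofReal (1 / (a * ‖x‖ ^ (d - 1))) else 0)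
    (ψ : EuclideanSpace ℝ (Fin d) → ℝ)
    (hψ : ConvexOn ℝ Set.univ ψ)
    (hpush : Measure.map (gradient ψ) (volume.withDensity u) =
      volume.withDensity fun x => ENNReal.ofReal (p x)) :
    ∀ M : Set (EuclideanSpace ℝ (Fin d)), IsCompact M →
      M ⊆ ball (0 : EuclideanSpace ℝ (Fin d)) 1 →
      ∃ α A_M : ℝ, 0 < α ∧ 0 < A_M ∧
        ∀ A : Set (EuclideanSpace ℝ (Fin d)), A ⊆ M → MeasurableSet A →
          ENNReal.ofReal α * volume A ≤
            volume (⋃ x ∈ A, {z : EuclideanSpace ℝ (Fin d) |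
              ∀ w, ψ x + ⟪z, w - x⟫ ≤ ψ w}) ∧
          volume (⋃ x ∈ A, {z : EuclideanSpace ℝ (Fin d) |
              ∀ w, ψ x + ⟪z, w - x⟫ ≤ ψ w}) ≤
            ENNReal.ofReal A_M * volume A ^ ((1 : ℝ) / d) := by
  intro M _ hM
  obtain rfl : u = sphericalDensity d a := funext fun x => by rw [hu x, sphericalDensity]; congr
  have : Nontrivial (EuclideanSpace ℝ (Fin d)) :=
    Module.nontrivial_of_finrank_pos (R := ℝ) (by rw [finrank_euclideanSpace_fin]; omega)
  have ha0 : 0 < a := ha ▸ by have := Gamma_pos_of_pos (by positivity : (0 : ℝ) < d / 2); positivity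
  have hu_pos := ae_ofReal_inv_le_sphericalDensity (d := d)
    (volume : Measure (EuclideanSpace ℝ (Fin d))) ha0
  obtain ⟨R, hR, hRball⟩ := hψ.exists_subdifferential_subset_ball 1
  obtain ⟨lam, Lam, hlam, hlamLam, hp⟩ := hAssumptionA R hR
  have hLam : 0 < Lam := hlam.trans_le hlamLam
  have hpX : ∀ᵐ x ∂volume, x ∈ closure X ∩ ball 0 R → lam ≤ p x ∧ p x ≤ Lam := by
    filter_upwards [hXconv.ae_mem_of_mem_closure hXo] with x hx hxXR
    exact hp x ⟨hx hxXR.1, hxXR.2⟩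
  have hT : MeasurableSet (closure X ∩ ball 0 R) :=
    isClosed_closure.measurableSet.inter measurableSet_ball
  refine ⟨a⁻¹ / Lam, (d * volume.real (ball (0 : EuclideanSpace ℝ (Fin d)) 1) + 1) / a / lam,
    by positivity, by positivity, fun A hAM hA => ?_⟩
  change _ ≤ volume (⋃ x ∈ A, subdifferential ψ x) ∧ volume (⋃ x ∈ A, subdifferential ψ x) ≤ _
  have hA1 : A ⊆ ball 0 1 := hAM.trans hM
  have hS : ⋃ x ∈ A, subdifferential ψ x ⊆ closure X ∩ ball 0 R := iUnion₂_subset fun x hx z hz =>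
    ⟨hψ.subdifferential_subset_closure_of_map_eq hXconv hXo.measurableSet isOpen_ball
      isBounded_ball measurable_sphericalDensity
      (hu_pos.mono fun y h hy => ((ENNReal.ofReal_pos.2 (inv_pos.2 ha0)).trans_le (h hy)).ne')
      hpush (fun y hy => by rw [hp0 y hy, ENNReal.ofReal_zero]) (hA1 hx) hz,
    hRball x (ball_subset_closedBall (hA1 hx)) hz⟩
  constructor
  · refine ENNReal.ofReal_div_mul_le hLam ?_
    calc ENNReal.ofReal a⁻¹ * volume A ≤ volume.withDensity (sphericalDensity d a) A :=
          mul_le_withDensity_apply_of_subset measurableSet_ball hA1 hu_pos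
      _ ≤ ENNReal.ofReal Lam * volume (⋃ x ∈ A, subdifferential ψ x) :=
          measure_le_mul_measure_iUnion_subdifferential hψ (withDensity_absolutelyContinuous _ _)
            hpush hT hS (hpX.mono fun x h hx => ENNReal.ofReal_le_ofReal (h hx).2)
  · refine ENNReal.le_ofReal_div_mul hlam ?_
    calc ENNReal.ofReal lam * volume (⋃ x ∈ A, subdifferential ψ x)
        ≤ volume.withDensity (sphericalDensity d a) A :=
          mul_measure_iUnion_subdifferential_le_withDensity hψ measurable_sphericalDensity
            (fun _ => mem_closedBall_of_sphericalDensity_ne_zero) hpush hT hS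
            (hpX.mono fun x h hx => ENNReal.ofReal_le_ofReal (h hx).1) hA
            (hA1.trans ball_subset_closedBall)
      _ ≤ _ := withDensity_sphericalDensity_le volume finrank_euclideanSpace_fin ha0.le
          ((measure_mono hA1).trans_lt measure_ball_lt_top).ne

/-- Monge–Ampère bounds for the quantile potential: if `∇ψ` pushes the spherical uniform
`U_d` forward to `P` with density `p` supported on an open convex `X` satisfying
Assumption A, then on every compact `M ⊂ B_d` the Monge–Ampère measure
`A ↦ ℓ_d(∂ψ(A))` satisfies `α_M ℓ_d(A) ≤ μ_ψ(A) ≤ A_M ℓ_d(A)^{1/d}`. -/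
theorem monge_ampere_bounds_on_compacts (d : ℕ) (hd : 1 ≤ d)
    (X : Set (EuclideanSpace ℝ (Fin d))) (hXo : IsOpen X) (hXconv : Convex ℝ X)
    (p : EuclideanSpace ℝ (Fin d) → ℝ)
    (hp0 : ∀ x ∉ X, p x = 0)
    (hAssumptionA : ∀ R : ℝ, 0 < R → ∃ lam Lam : ℝ, 0 < lam ∧ lam ≤ Lam ∧
      ∀ x ∈ X ∩ ball (0 : EuclideanSpace ℝ (Fin d)) R, lam ≤ p x ∧ p x ≤ Lam)
    (a : ℝ) (ha : a = 2 * π ^ ((d : ℝ) / 2) / Gamma ((d : ℝ) / 2))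
    (u : EuclideanSpace ℝ (Fin d) → ℝ≥0∞)
    (hu : ∀ x, u x = if x ∈ ball (0 : EuclideanSpace ℝ (Fin d)) 1 \ {0}
      then ENNReal.ofReal (1 / (a * ‖x‖ ^ (d - 1))) else 0)
    (ψ : EuclideanSpace ℝ (Fin d) → ℝ)
    (hψ : ConvexOn ℝ Set.univ ψ) (hψlsc : LowerSemicontinuous ψ)
    (hpush : Measure.map (gradient ψ) (volume.withDensity u) =
      volume.withDensity fun x => ENNReal.ofReal (p x)) :
    ∀ M : Set (EuclideanSpace ℝ (Fin d)), IsCompact M →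
      M ⊆ ball (0 : EuclideanSpace ℝ (Fin d)) 1 →
      ∃ α A_M : ℝ, 0 < α ∧ 0 < A_M ∧
        ∀ A : Set (EuclideanSpace ℝ (Fin d)), A ⊆ M → MeasurableSet A →
          ENNReal.ofReal α * volume A ≤
            volume (⋃ x ∈ A, {z : EuclideanSpace ℝ (Fin d) |
              ∀ w, ψ x + ⟪z, w - x⟫ ≤ ψ w}) ∧
          volume (⋃ x ∈ A, {z : EuclideanSpace ℝ (Fin d) |
              ∀ w, ψ x + ⟪z, w - x⟫ ≤ ψ w}) ≤
            ENNReal.ofReal A_M * volume A ^ ((1 : ℝ) / d) :=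
  monge_ampere_bounds_on_compacts_general d hd X hXo hXconv p hp0 hAssumptionA a ha u hu ψ hψ hpush
end

section
/- Let ψ be a convex function on R^d, let e_1 ∈ ∂ψ-related data satisfy: dom ψ ⊆ {z : z_1 ≤ 1}, ψ(e_1) finite, and {c e_1 : c ≥ 0} ⊆ ∂ψ(e_1). For θ > 0 define C_θ = {x = (x_1, x') : x_1 > 0, |x'| ≤ θ x_1}. If x ∈ C_θ and z ∈ ∂ψ*(x) (equivalently x ∈ ∂ψ(z)), then z_1 ≤ 1 and z_1 − 1 ≥ −θ|z'|, i.e. z ∈ {z : −θ|z'| ≤ z_1 − 1 ≤ 0}. -/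
open Metric
open RealInnerProductSpace

/-
Since `ψ(e₁)` is finite, the subgradient inequality at `z` tested at `e₁` shows that `ψ(z)` is
finite, so `z₁ ≤ 1` by the domain constraint. Monotonicity of the subdifferential, applied to
`x ∈ ∂ψ(z)` and `0 ∈ ∂ψ(e₁)`, gives `⟪x, z - e₁⟫ ≥ 0`. Splitting off the first coordinate,
`0 ≤ ⟪x', z'⟫ + x₁ (z₁ - 1) ≤ x₁ (θ |z'| + z₁ - 1)` by Cauchy–Schwarz and `|x'| ≤ θ x₁`,
and dividing by `x₁ > 0` gives the lower bound.
-/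

section Subgradient

variable {E : Type*} [NormedAddCommGroup E] [InnerProductSpace ℝ E]

/-- `u ∈ ∂f(a)` for an extended-real-valued `f`. -/
def HasSubgradientAt (f : E → EReal) (u a : E) : Prop :=
  ∀ y, f a + ((⟪u, y - a⟫ : ℝ) : EReal) ≤ f y

variable {f : E → EReal} {u v a b : E}

theorem HasSubgradientAt.ne_top (ha : HasSubgradientAt f u a) (hb : f b ≠ ⊤) : f a ≠ ⊤ := by
  intro h
  have := ha b
  rw [h, EReal.top_add_coe, top_le_iff] at this
  exact hb this

theorem HasSubgradientAt.inner_sub_nonneg (ha : HasSubgradientAt f u a)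
    (hb : HasSubgradientAt f v b) (hb_bot : f b ≠ ⊥) (hb_top : f b ≠ ⊤) :
    0 ≤ ⟪u - v, a - b⟫ := by
  have ha_bot : f a ≠ ⊥ := fun h ↦ by
    have := hb a
    rw [h, le_bot_iff, ← EReal.coe_toReal hb_top hb_bot, ← EReal.coe_add] at this
    exact EReal.coe_ne_bot _ this
  have hab := ha b
  have hba := hb a
  rw [← EReal.coe_toReal (ha.ne_top hb_top) ha_bot, ← EReal.coe_toReal hb_top hb_bot,
    ← EReal.coe_add, EReal.coe_le_coe_iff] at hab hba
  have hflip : ⟪u, b - a⟫ = -⟪u, a - b⟫ := by rw [← inner_neg_right, neg_sub]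
  rw [inner_sub_left]
  linarith

end Subgradient

theorem neg_mul_norm_le_inner_of_mem_cone {E : Type*} [NormedAddCommGroup E]
    [InnerProductSpace ℝ E] {e x w : E} {θ : ℝ} (he : ⟪e, e⟫ = 1) (hx₁ : 0 < ⟪x, e⟫)
    (hx : ‖x - ⟪x, e⟫ • e‖ ≤ θ * ⟪x, e⟫) (hxw : 0 ≤ ⟪x, w⟫) :
    -θ * ‖w - ⟪w, e⟫ • e‖ ≤ ⟪w, e⟫ := by
  have hsplit : ⟪x, w⟫ = ⟪x - ⟪x, e⟫ • e, w - ⟪w, e⟫ • e⟫ + ⟪x, e⟫ * ⟪w, e⟫ := by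
    simp only [inner_sub_left, inner_sub_right, inner_smul_left, inner_smul_right, he,
      real_inner_comm e, conj_trivial]
    ring
  have hcs : ⟪x - ⟪x, e⟫ • e, w - ⟪w, e⟫ • e⟫ ≤ θ * ⟪x, e⟫ * ‖w - ⟪w, e⟫ • e‖ :=
    (real_inner_le_norm _ _).trans (mul_le_mul_of_nonneg_right hx (norm_nonneg _))
  have : 0 ≤ ⟪x, e⟫ * (θ * ‖w - ⟪w, e⟫ • e‖ + ⟪w, e⟫) := by nlinarith
  nlinarith [(mul_nonneg_iff_of_pos_left hx₁).mp this]

/-- If `ψ` is convex with `dom ψ ⊆ {z₁ ≤ 1}`, `ψ(e₁)` finite, and the ray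
`{c e₁ : c ≥ 0}` contained in `∂ψ(e₁)`, then for `x` in the cone
`C_θ = {x : x₁ > 0, |x'| ≤ θ x₁}` and `z` with `x ∈ ∂ψ(z)`, one has `z₁ ≤ 1` and
`z₁ − 1 ≥ −θ|z'|`. -/
theorem cone_dual_subgradient_location (d : ℕ) (hd : 1 ≤ d)
    (e₁ : EuclideanSpace ℝ (Fin d))
    (he₁ : e₁ = EuclideanSpace.single (⟨0, by omega⟩ : Fin d) 1)
    (ψ : EuclideanSpace ℝ (Fin d) → EReal)
    (hdom : ∀ z, ψ z ≠ ⊤ → ⟪z, e₁⟫ ≤ 1)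
    (hfin : ∃ r : ℝ, ψ e₁ = (r : EReal))
    (hray : ∀ c : ℝ, 0 ≤ c → ∀ y,
      ψ e₁ + ((⟪c • e₁, y - e₁⟫ : ℝ) : EReal) ≤ ψ y) :
    ∀ θ : ℝ, 0 < θ → ∀ x z : EuclideanSpace ℝ (Fin d),
      0 < ⟪x, e₁⟫ → ‖x - ⟪x, e₁⟫ • e₁‖ ≤ θ * ⟪x, e₁⟫ →
      (∀ y, ψ z + ((⟪x, y - z⟫ : ℝ) : EReal) ≤ ψ y) →
      ⟪z, e₁⟫ ≤ 1 ∧ -θ * ‖z - ⟪z, e₁⟫ • e₁‖ ≤ ⟪z, e₁⟫ - 1 := by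
  intro θ _ x z hx₁ hx hsub
  obtain ⟨r, hr⟩ := hfin
  have he : ⟪e₁, e₁⟫ = 1 := by simp [he₁]
  have hψe_top : ψ e₁ ≠ ⊤ := hr ▸ EReal.coe_ne_top r
  refine ⟨hdom z (HasSubgradientAt.ne_top hsub hψe_top), ?_⟩
  have hzero : HasSubgradientAt ψ 0 e₁ := by simpa only [HasSubgradientAt, zero_smul] using hray 0 le_rfl
  have hmono : 0 ≤ ⟪x, z - e₁⟫ := by
    simpa using HasSubgradientAt.inner_sub_nonneg hsub hzero (hr ▸ EReal.coe_ne_bot r) hψe_top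
  have key := neg_mul_norm_le_inner_of_mem_cone he hx₁ hx hmono
  have hproj : z - e₁ - ⟪z - e₁, e₁⟫ • e₁ = z - ⟪z, e₁⟫ • e₁ := by
    rw [inner_sub_left, he, sub_smul, one_smul]; abel
  rwa [hproj, inner_sub_left, he] at key
end
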